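/- Assume f satisfies hypotheses (H). If Y ⊆ X is a finite-dimensional linear subspace spanned by (essentially) bounded functions, then sup_{u ∈ Y} φ(u) < ∞ and φ(u) → −∞ as ‖u‖_X → ∞ with u ∈ Y (i.e. for every A > 0 there exists R > 0 such that φ(u) ≤ −A whenever u ∈ Y and ‖u‖_X ≥ R). -/

import Mathlib

open MeasureTheory Real Set Filter Topology

noncomputable section

/-- Integrand of the squared Gagliardo `H^{1/2}` seminorm on `ℝ`. -/
def gagKer (u : ℝ → ℝ) : ℝ × ℝ → ℝ :=
  fun p => (u p.1 - u p.2) ^ 2 / |p.1 - p.2| ^ 2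

/-- Integrand of the Gagliardo inner product `⟨u,v⟩_X`. -/
def innerKer (u v : ℝ → ℝ) : ℝ × ℝ → ℝ :=
  fun p => (u p.1 - u p.2) * (v p.1 - v p.2) / |p.1 - p.2| ^ 2

/-- `u ∈ H^{1/2}(ℝ)` : `u ∈ L²(ℝ)` with finite Gagliardo seminorm. -/
def memH (u : ℝ → ℝ) : Prop :=
  Measurable u ∧ Integrable (fun x => (u x) ^ 2) ∧ Integrable (gagKer u)

/-- Squared Gagliardo seminorm `[u]²`. -/
def gagSq (u : ℝ → ℝ) : ℝ := ∫ p : ℝ × ℝ, gagKer u p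

/-- Gagliardo seminorm `[u]`, i.e. the norm `‖u‖_X`. -/
def gagNorm (u : ℝ → ℝ) : ℝ := Real.sqrt (gagSq u)

/-- Inner product `⟨u, v⟩_X`. -/
def innerX (u v : ℝ → ℝ) : ℝ := ∫ p : ℝ × ℝ, innerKer u v p

/-- `u ∈ X` : `u ∈ H^{1/2}(ℝ)` and `u = 0` a.e. outside `(0,1)`. -/
def memX (u : ℝ → ℝ) : Prop :=
  memH u ∧ ∀ᵐ x : ℝ, x ∉ Ioo (0 : ℝ) 1 → u x = 0

/-- `λ₁ = inf {[u]² : u ∈ X, ‖u‖_{L²(0,1)} = 1}`. -/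
def lam1 : ℝ :=
  sInf { t : ℝ | ∃ u : ℝ → ℝ, memX u ∧ (∫ x in Ioo (0 : ℝ) 1, (u x) ^ 2) = 1 ∧ gagSq u = t }

/-- Trudinger–Moser property with constant `ω`. -/
def TMprop (ω : ℝ) : Prop :=
  ∀ α : ℝ, 0 < α → α < 2 * π * ω →
    ∃ K : ℝ, 0 < K ∧ ∀ u : ℝ → ℝ, memX u → gagNorm u ≤ 1 →
      (∫⁻ x in Ioo (0 : ℝ) 1, ENNReal.ofReal (exp (α * (u x) ^ 2))) ≤ ENNReal.ofReal K

/-- The primitive `F(t) = ∫₀ᵗ f(τ) dτ`. -/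
def primF (f : ℝ → ℝ) : ℝ → ℝ := fun t => ∫ τ in (0 : ℝ)..t, f τ

/-- Hypotheses (H). -/
def HypH (f : ℝ → ℝ) : Prop :=
  Continuous f ∧ f 0 = 0 ∧
  (∃ t₀ > (0 : ℝ), ∃ M > (0 : ℝ),
    ∀ t : ℝ, t₀ ≤ |t| → 0 < primF f t ∧ primF f t ≤ M * |f t|) ∧
  (∀ t : ℝ, t ≠ 0 → 0 < 2 * primF f t ∧ 2 * primF f t ≤ f t * t) ∧
  (Filter.limsup (fun t => primF f t / t ^ 2) (𝓝[≠] (0 : ℝ)) < lam1 / (4 * π)) ∧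
  (∀ α : ℝ, 0 < α →
    Filter.Tendsto (fun t => |f t| * exp (-α * t ^ 2)) (Filter.cocompact ℝ) (𝓝 0))

/-- Hypotheses (H') with Trudinger–Moser constant `ω`. -/
def HypH' (f : ℝ → ℝ) (ω : ℝ) : Prop :=
  Continuous f ∧ f 0 = 0 ∧
  (∃ t₀ > (0 : ℝ), ∃ M > (0 : ℝ),
    ∀ t : ℝ, t₀ ≤ |t| → 0 < primF f t ∧ primF f t ≤ M * |f t|) ∧
  (∀ t : ℝ, t ≠ 0 → 0 < 2 * primF f t ∧ 2 * primF f t ≤ f t * t) ∧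
  (Filter.limsup (fun t => primF f t / t ^ 2) (𝓝[≠] (0 : ℝ)) < lam1 / (4 * π)) ∧
  ∃ α₀ : ℝ, 0 < α₀ ∧ α₀ < 2 * π * ω ∧
    (∀ α : ℝ, 0 < α → α < α₀ →
      Filter.Tendsto (fun t => |f t| * exp (-α * t ^ 2)) (Filter.cocompact ℝ) Filter.atTop) ∧
    (∀ α : ℝ, α₀ < α →
      Filter.Tendsto (fun t => |f t| * exp (-α * t ^ 2)) (Filter.cocompact ℝ) (𝓝 0)) ∧
    ∃ ψ : ℝ → ℝ, memX ψ ∧ gagNorm ψ = 1 ∧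
      ∃ b : ℝ, b < ω / (2 * α₀) ∧ ∀ t : ℝ, 0 < t →
        t ^ 2 / (4 * π) - (∫ x in Ioo (0 : ℝ) 1, primF f (t * ψ x)) ≤ b

/-- `u` is a (weak) solution of `(-Δ)^{1/2} u = f(u)` in `(0,1)`, `u = 0` outside. -/
def IsWeakSolution (f u : ℝ → ℝ) : Prop :=
  memX u ∧ ∀ v : ℝ → ℝ, memX v →
    IntegrableOn (fun x => f (u x) * v x) (Ioo (0 : ℝ) 1) ∧
    innerX u v / (2 * π) = ∫ x in Ioo (0 : ℝ) 1, f (u x) * v x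

/-- The energy functional `φ(u) = ‖u‖_X²/(4π) - ∫₀¹ F(u) dx`. -/
def phi (f u : ℝ → ℝ) : ℝ :=
  gagSq u / (4 * π) - ∫ x in Ioo (0 : ℝ) 1, primF f (u x)

/-- `⟨φ'(u), v⟩ = (1/(2π))⟨u,v⟩_X - ∫₀¹ f(u) v dx`. -/
def phiDeriv (f u v : ℝ → ℝ) : ℝ :=
  innerX u v / (2 * π) - ∫ x in Ioo (0 : ℝ) 1, f (u x) * v x

/-- The Palais–Smale condition at level `c`. -/
def PalaisSmaleAt (f : ℝ → ℝ) (c : ℝ) : Prop :=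
  ∀ u : ℕ → ℝ → ℝ, (∀ n, memX (u n)) →
    Filter.Tendsto (fun n => phi f (u n)) Filter.atTop (𝓝 c) →
    (∃ ε : ℕ → ℝ, Filter.Tendsto ε Filter.atTop (𝓝 0) ∧
      ∀ n, ∀ v : ℝ → ℝ, memX v → gagNorm v ≤ 1 → |phiDeriv f (u n) v| ≤ ε n) →
    ∃ w : ℝ → ℝ, memX w ∧ ∃ g : ℕ → ℕ, StrictMono g ∧
      Filter.Tendsto (fun k => gagNorm (fun x => u (g k) x - w x)) Filter.atTop (𝓝 0)

/-!
Conditions (i) and (ii) make `F = primF f` grow exponentially, so `F(t) ≥ c t⁴ - d`. On the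
finite-dimensional space `Y` the seminorm `[u]` is dominated by `‖u‖_{L²(0,1)}`: both are norms of
linear maps of `Y` into `L²` spaces, and the kernel of the second lies in that of the first because
elements of `X` vanish outside `(0,1)`. With Jensen's inequality `(∫u²)² ≤ ∫u⁴` and the
boundedness of `u` (which makes `F(u)` integrable) this gives
`φ(u) ≤ [u]²/(4π) - ε [u]⁴ + d`, a quartic in `[u]` with negative leading coefficient.
-/

namespace LinearMap

variable {𝕜 V α E : Type*} [RCLike 𝕜] [AddCommGroup V] [Module 𝕜 V] [MeasurableSpace α]
  {μ : Measure α} [NormedAddCommGroup E] [NormedSpace 𝕜 E] {p : ENNReal} [Fact (1 ≤ p)]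

def toLpOfMemLp (D : V →ₗ[𝕜] α → E) (hD : ∀ v, MemLp (D v) p μ) : V →ₗ[𝕜] Lp E p μ where
  toFun v := (hD v).toLp (D v)
  map_add' v w := by simp_rw [map_add]; exact MemLp.toLp_add (hD v) (hD w)
  map_smul' a v := by simp_rw [map_smul]; exact MemLp.toLp_const_smul a (hD v)

end LinearMap

lemma MeasureTheory.MemLp.norm_toLp_two_eq_sqrt {α : Type*} [MeasurableSpace α] {μ : Measure α}
    {g : α → ℝ} (hg : MemLp g 2 μ) : ‖hg.toLp g‖ = √(∫ x, g x ^ 2 ∂μ) := by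
  rw [← Real.sqrt_sq (norm_nonneg _), ← real_inner_self_eq_norm_sq, L2.inner_def]
  congr 1
  refine integral_congr_ae ?_
  filter_upwards [hg.coeFn_toLp] with x hx
  simp [hx, sq]

lemma LinearMap.exists_norm_le_mul_norm_of_ker_le {V F G : Type*} [AddCommGroup V] [Module ℝ V]
    [FiniteDimensional ℝ V] [NormedAddCommGroup F] [NormedSpace ℝ F] [NormedAddCommGroup G]
    [NormedSpace ℝ G] (T : V →ₗ[ℝ] F) (S : V →ₗ[ℝ] G) (h : ker T ≤ ker S) :
    ∃ K, ∀ v, ‖S v‖ ≤ K * ‖T v‖ := by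
  let H : range T →ₗ[ℝ] G := (ker T).liftQ S h ∘ₗ T.quotKerEquivRange.symm.toLinearMap
  have hH : ∀ v, H ⟨T v, mem_range_self T v⟩ = S v := fun v => by
    simp [H, LinearMap.quotKerEquivRange_symm_apply_image]
  refine ⟨‖H.toContinuousLinearMap‖, fun v => ?_⟩
  rw [← hH]
  exact H.toContinuousLinearMap.le_opNorm _

lemma primF_hasDerivAt {f : ℝ → ℝ} (hf : Continuous f) (t : ℝ) :
    HasDerivAt (primF f) (f t) t :=
  intervalIntegral.integral_hasDerivAt_right (hf.intervalIntegrable _ _)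
    (hf.stronglyMeasurableAtFilter _ _) hf.continuousAt

lemma primF_nonneg {f : ℝ → ℝ}
    (hAR : ∀ t : ℝ, t ≠ 0 → 0 < 2 * primF f t ∧ 2 * primF f t ≤ f t * t) (t : ℝ) :
    0 ≤ primF f t := by
  rcases eq_or_ne t 0 with rfl | ht
  · simp [primF]
  · linarith [(hAR t ht).1]

/-- `F ≤ M F'` on `[a, ∞)` makes `F(t) e^{-t/M}` nondecreasing there. -/
lemma mul_exp_le_of_le_mul_deriv {F F' : ℝ → ℝ} {M a : ℝ} (hM : 0 < M)
    (hF : ∀ t, HasDerivAt F (F' t) t) (hle : ∀ t, a ≤ t → F t ≤ M * F' t) {t : ℝ} (ht : a ≤ t) :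
    F a * exp ((t - a) / M) ≤ F t := by
  set g := fun s => F s * exp (-(s / M))
  have hg (s : ℝ) : HasDerivAt g ((F' s - F s / M) * exp (-(s / M))) s :=
    ((hF s).mul ((hasDerivAt_id s).div_const M).neg.exp).congr_deriv
      (by simp only [id, Pi.neg_apply]; ring)
  have hmono : MonotoneOn g (Ici a) := by
    refine monotoneOn_of_deriv_nonneg (convex_Ici a)
      (fun s _ => (hg s).continuousAt.continuousWithinAt)
      (fun s _ => (hg s).differentiableAt.differentiableWithinAt) fun s hs => ?_
    rw [interior_Ici] at hs
    rw [(hg s).deriv]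
    have hFs := hle s hs.le
    have : 0 ≤ F' s - F s / M := by rw [sub_nonneg, div_le_iff₀ hM]; linarith
    positivity
  have := mul_le_mul_of_nonneg_right (hmono self_mem_Ici ht ht) (exp_pos (t / M)).le
  simp only [g, mul_assoc, ← exp_add] at this
  rwa [neg_add_cancel, exp_zero, mul_one, ← sub_eq_neg_add, ← sub_div] at this

section Growth

variable {f : ℝ → ℝ} {t₀ M : ℝ}

lemma exists_mul_exp_le_primF (hf : Continuous f) (ht₀ : 0 < t₀) (hM : 0 < M)
    (hgrowth : ∀ t : ℝ, t₀ ≤ |t| → 0 < primF f t ∧ primF f t ≤ M * |f t|)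
    (hAR : ∀ t : ℝ, t ≠ 0 → 0 < 2 * primF f t ∧ 2 * primF f t ≤ f t * t) :
    ∃ a > 0, ∀ t, t₀ ≤ |t| → a * exp (|t| / M) ≤ primF f t := by
  have hright : ∀ t, t₀ ≤ t → primF f t ≤ M * f t := fun t ht => by
    have htpos : 0 < t := ht₀.trans_le ht
    have hft : 0 < f t := pos_of_mul_pos_left ((hAR t htpos.ne').1.trans_le (hAR t htpos.ne').2)
      htpos.le
    simpa [abs_of_pos hft] using (hgrowth t (by rwa [abs_of_pos htpos])).2
  have hleft : ∀ t, t₀ ≤ t → primF f (-t) ≤ M * -f (-t) := fun t ht => by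
    have htpos : 0 < t := ht₀.trans_le ht
    have hft : f (-t) < 0 := by
      obtain ⟨hF, hFf⟩ := hAR (-t) (neg_ne_zero.2 htpos.ne')
      nlinarith
    simpa [abs_of_neg hft] using (hgrowth (-t) (by rwa [abs_neg, abs_of_pos htpos])).2
  have hderiv_left (s : ℝ) : HasDerivAt (fun s => primF f (-s)) (-f (-s)) s :=
    ((primF_hasDerivAt hf (-s)).comp s (hasDerivAt_neg s)).congr_deriv (mul_neg_one _)
  set a := min (primF f t₀) (primF f (-t₀)) * exp (-(t₀ / M))
  have ha : 0 < a := by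
    have h₁ := (hgrowth t₀ (le_abs_self t₀)).1
    have h₂ := (hgrowth (-t₀) (by rw [abs_neg]; exact le_abs_self t₀)).1
    positivity
  refine ⟨a, ha, fun t ht => ?_⟩
  have hexp : exp (|t| / M) * exp (-(t₀ / M)) = exp ((|t| - t₀) / M) := by
    rw [← exp_add]; ring_nf
  rcases le_total 0 t with h0 | h0
  · rw [abs_of_nonneg h0] at ht hexp ⊢
    calc a * exp (t / M) ≤ primF f t₀ * exp ((t - t₀) / M) := by
          rw [← hexp, ← mul_assoc, mul_right_comm]
          gcongr
          exact min_le_left _ _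
      _ ≤ primF f t := mul_exp_le_of_le_mul_deriv hM (primF_hasDerivAt hf) hright ht
  · rw [abs_of_nonpos h0] at ht hexp ⊢
    calc a * exp (-t / M) ≤ primF f (-t₀) * exp ((-t - t₀) / M) := by
          rw [← hexp, ← mul_assoc, mul_right_comm]
          gcongr
          exact min_le_right _ _
      _ ≤ primF f t := by
          simpa using mul_exp_le_of_le_mul_deriv hM hderiv_left hleft ht

lemma exists_quartic_le_primF (hf : Continuous f) (ht₀ : 0 < t₀) (hM : 0 < M)
    (hgrowth : ∀ t : ℝ, t₀ ≤ |t| → 0 < primF f t ∧ primF f t ≤ M * |f t|)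
    (hAR : ∀ t : ℝ, t ≠ 0 → 0 < 2 * primF f t ∧ 2 * primF f t ≤ f t * t) :
    ∃ c > 0, ∃ d, ∀ t, c * t ^ 4 - d ≤ primF f t := by
  obtain ⟨a, ha, hbound⟩ := exists_mul_exp_le_primF hf ht₀ hM hgrowth hAR
  set c := a / (M ^ 4 * (Nat.factorial 4 : ℝ))
  have hc : 0 < c := by positivity
  refine ⟨c, hc, c * t₀ ^ 4, fun t => ?_⟩
  have ht4 : t ^ 4 = |t| ^ 4 := (Even.pow_abs ⟨2, rfl⟩ t).symm
  rcases le_or_gt t₀ |t| with ht | ht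
  · calc c * t ^ 4 - c * t₀ ^ 4 ≤ c * t ^ 4 := by linarith [mul_pos hc (pow_pos ht₀ 4)]
      _ = a * ((|t| / M) ^ 4 / (Nat.factorial 4 : ℝ)) := by rw [ht4]; simp only [c]; field_simp
      _ ≤ a * exp (|t| / M) := by gcongr; exact Real.pow_div_factorial_le_exp _ (by positivity) 4
      _ ≤ primF f t := hbound t ht
  · have : c * t ^ 4 ≤ c * t₀ ^ 4 := by rw [ht4]; gcongr
    linarith [primF_nonneg hAR t]

end Growth

lemma le_integral_comp_of_quartic_le {α : Type*} [MeasurableSpace α] {μ : Measure α}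
    [IsProbabilityMeasure μ] {F : ℝ → ℝ} (hF : Continuous F) {c d : ℝ} (hc : 0 ≤ c)
    (hFge : ∀ t, c * t ^ 4 - d ≤ F t) {u : α → ℝ} (hu : AEStronglyMeasurable u μ) {C : ℝ}
    (hC : ∀ᵐ x ∂μ, |u x| ≤ C) :
    c * (∫ x, u x ^ 2 ∂μ) ^ 2 - d ≤ ∫ x, F (u x) ∂μ := by
  have hsq : MemLp (fun x => u x ^ 2) 2 μ := by
    refine MemLp.of_bound (hu.pow 2) (C ^ 2) ?_
    filter_upwards [hC] with x hx
    rw [norm_pow, Real.norm_eq_abs]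
    gcongr
  have hquart : Integrable (fun x => c * (u x ^ 2) ^ 2 - d) μ :=
    (hsq.integrable_sq.const_mul c).sub (integrable_const d)
  obtain ⟨D, hD⟩ := (isCompact_Icc (a := -C) (b := C)).exists_bound_of_continuousOn hF.continuousOn
  have hFu : Integrable (fun x => F (u x)) μ := by
    refine Integrable.of_bound (hF.comp_aestronglyMeasurable hu) D ?_
    filter_upwards [hC] with x hx
    exact hD _ (abs_le.1 hx)
  have hjensen : (∫ x, u x ^ 2 ∂μ) ^ 2 ≤ ∫ x, (u x ^ 2) ^ 2 ∂μ := by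
    have := ProbabilityTheory.variance_nonneg (fun x => u x ^ 2) μ
    rw [ProbabilityTheory.variance_eq_sub hsq] at this
    simpa only [Pi.pow_apply, sub_nonneg] using this
  calc c * (∫ x, u x ^ 2 ∂μ) ^ 2 - d ≤ c * ∫ x, (u x ^ 2) ^ 2 ∂μ - d := by gcongr
    _ = ∫ x, (c * (u x ^ 2) ^ 2 - d) ∂μ := by
        rw [integral_sub (hsq.integrable_sq.const_mul c) (integrable_const d), integral_const_mul,
          integral_const, probReal_univ, one_smul]
    _ ≤ ∫ x, F (u x) ∂μ :=
        integral_mono hquart hFu fun x => by simpa only [← pow_mul] using hFge (u x)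

def diffQuot : (ℝ → ℝ) →ₗ[ℝ] ℝ × ℝ → ℝ where
  toFun u q := (u q.1 - u q.2) / |q.1 - q.2|
  map_add' u v := by ext q; simp only [Pi.add_apply]; ring
  map_smul' a u := by ext q; simp only [Pi.smul_apply, smul_eq_mul, RingHom.id_apply]; ring

lemma gagKer_eq_diffQuot_sq (u : ℝ → ℝ) (q : ℝ × ℝ) : gagKer u q = diffQuot u q ^ 2 :=
  (div_pow _ _ _).symm

lemma gagSq_nonneg (u : ℝ → ℝ) : 0 ≤ gagSq u :=
  integral_nonneg fun _ => div_nonneg (sq_nonneg _) (sq_nonneg _)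

lemma memH.memLp_diffQuot {u : ℝ → ℝ} (hu : memH u) : MemLp (diffQuot u) 2 volume := by
  have hm : Measurable (diffQuot u) :=
    ((hu.1.comp measurable_fst).sub (hu.1.comp measurable_snd)).div
      (measurable_fst.sub measurable_snd).abs
  refine (memLp_two_iff_integrable_sq hm.aestronglyMeasurable).2 ?_
  exact hu.2.2.congr (ae_of_all _ (gagKer_eq_diffQuot_sq u))

lemma diffQuot_ae_eq_zero {u : ℝ → ℝ} (hu : u =ᵐ[volume] 0) : diffQuot u =ᵐ[volume] 0 := by
  rw [Measure.volume_eq_prod]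
  filter_upwards [Measure.quasiMeasurePreserving_fst.ae_eq_comp hu,
    Measure.quasiMeasurePreserving_snd.ae_eq_comp hu] with q h₁ h₂
  simp [diffQuot, Function.comp_apply ▸ h₁, Function.comp_apply ▸ h₂]

lemma memX.ae_eq_zero_of_ae_restrict_eq_zero {u : ℝ → ℝ} (hu : memX u)
    (h : u =ᵐ[volume.restrict (Ioo 0 1)] 0) : u =ᵐ[volume] 0 := by
  filter_upwards [(ae_restrict_iff' measurableSet_Ioo).1 h, hu.2] with x h₁ h₂
  by_cases hx : x ∈ Ioo (0 : ℝ) 1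
  exacts [h₁ hx, h₂ hx]

lemma exists_gagNorm_le_mul_sqrt_integral (V : Submodule ℝ (ℝ → ℝ)) [FiniteDimensional ℝ V]
    (hV : ∀ u ∈ V, memX u) :
    ∃ K, 0 < K ∧ ∀ u ∈ V, gagNorm u ≤ K * √(∫ x in Ioo 0 1, u x ^ 2) := by
  have hL2 (u : V) : MemLp (V.subtype u) 2 (volume.restrict (Ioo 0 1)) :=
    ((memLp_two_iff_integrable_sq (hV u u.2).1.1.aestronglyMeasurable).2
      (hV u u.2).1.2.1).restrict _
  have hX (u : V) : MemLp ((diffQuot ∘ₗ V.subtype) u) 2 volume := (hV u u.2).1.memLp_diffQuot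
  set T := V.subtype.toLpOfMemLp hL2
  set S := (diffQuot ∘ₗ V.subtype).toLpOfMemLp hX
  have hT (u : V) : ‖T u‖ = √(∫ x in Ioo 0 1, (u : ℝ → ℝ) x ^ 2) := (hL2 u).norm_toLp_two_eq_sqrt
  have hS (u : V) : ‖S u‖ = gagNorm u := by
    simp only [gagNorm, gagSq, gagKer_eq_diffQuot_sq]
    exact (hX u).norm_toLp_two_eq_sqrt
  have hker : LinearMap.ker T ≤ LinearMap.ker S := fun u hu => by
    have hu0 : (u : ℝ → ℝ) =ᵐ[volume.restrict (Ioo 0 1)] 0 :=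
      ((hL2 u).toLp_eq_toLp_iff MemLp.zero).1 (hu.trans (MemLp.toLp_zero _).symm)
    have := diffQuot_ae_eq_zero ((hV u u.2).ae_eq_zero_of_ae_restrict_eq_zero hu0)
    exact ((hX u).toLp_congr MemLp.zero this).trans (MemLp.toLp_zero _)
  obtain ⟨K, hK⟩ := T.exists_norm_le_mul_norm_of_ker_le S hker
  refine ⟨max K 1, by positivity, fun u hu => ?_⟩
  rw [← hT ⟨u, hu⟩, ← hS ⟨u, hu⟩]
  exact (hK _).trans (mul_le_mul_of_nonneg_right (le_max_left _ _) (norm_nonneg _))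

lemma ae_bounded_of_mem_span {α ι : Type*} [MeasurableSpace α] {μ : Measure α} {b : ι → α → ℝ}
    (hb : ∀ i, ∃ C, ∀ᵐ x ∂μ, |b i x| ≤ C) {u : α → ℝ} (hu : u ∈ Submodule.span ℝ (range b)) :
    ∃ C, ∀ᵐ x ∂μ, |u x| ≤ C := by
  induction hu using Submodule.span_induction with
  | mem v hv =>
    obtain ⟨i, rfl⟩ := hv
    exact hb i
  | zero => exact ⟨0, ae_of_all _ fun x => by simp⟩
  | add v w _ _ hv hw =>
    obtain ⟨C₁, h₁⟩ := hv
    obtain ⟨C₂, h₂⟩ := hw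
    refine ⟨C₁ + C₂, ?_⟩
    filter_upwards [h₁, h₂] with x hx₁ hx₂
    exact (abs_add_le _ _).trans (add_le_add hx₁ hx₂)
  | smul a v _ hv =>
    obtain ⟨C, h⟩ := hv
    refine ⟨|a| * C, ?_⟩
    filter_upwards [h] with x hx
    rw [Pi.smul_apply, smul_eq_mul, abs_mul]
    gcongr

lemma continuous_primF {f : ℝ → ℝ} (hf : Continuous f) : Continuous (primF f) :=
  continuous_iff_continuousAt.2 fun t => (primF_hasDerivAt hf t).continuousAt

instance isProbabilityMeasure_restrict_Ioo_zero_one :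
    IsProbabilityMeasure (volume.restrict (Ioo (0 : ℝ) 1)) :=
  ⟨by simp⟩

lemma phi_le_of_quartic_le_primF {f : ℝ → ℝ} (hf : Continuous f) {c d K : ℝ} (hc : 0 < c)
    (hK : 0 < K) (hFge : ∀ t, c * t ^ 4 - d ≤ primF f t) {u : ℝ → ℝ} (hu : memX u) {C : ℝ}
    (hC : ∀ᵐ x, |u x| ≤ C) (hKu : gagNorm u ≤ K * √(∫ x in Ioo 0 1, u x ^ 2)) :
    phi f u ≤ (4 * π)⁻¹ * gagNorm u ^ 2 - c / K ^ 4 * gagNorm u ^ 4 + d := by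
  set s := ∫ x in Ioo 0 1, u x ^ 2
  have hpot : c * s ^ 2 - d ≤ ∫ x in Ioo 0 1, primF f (u x) :=
    le_integral_comp_of_quartic_le (continuous_primF hf) hc.le hFge hu.1.1.aestronglyMeasurable
      (ae_restrict_of_ae hC)
  have hnorm : c / K ^ 4 * gagNorm u ^ 4 ≤ c * s ^ 2 := by
    have h4 : gagNorm u ^ 4 ≤ K ^ 4 * s ^ 2 := by
      calc gagNorm u ^ 4 ≤ (K * √s) ^ 4 := by gcongr; exact Real.sqrt_nonneg _
        _ = K ^ 4 * s ^ 2 := by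
          have hs : 0 ≤ s := setIntegral_nonneg measurableSet_Ioo fun x _ => sq_nonneg (u x)
          rw [mul_pow, show √s ^ 4 = (√s ^ 2) ^ 2 by ring, Real.sq_sqrt hs]
    rw [div_mul_eq_mul_div, div_le_iff₀ (by positivity)]
    nlinarith
  have hgag : gagSq u = gagNorm u ^ 2 := (Real.sq_sqrt (gagSq_nonneg u)).symm
  rw [phi, hgag, div_eq_inv_mul]
  linarith

lemma mul_sq_sub_mul_pow_four_le (a : ℝ) {ε : ℝ} (hε : 0 < ε) (s : ℝ) :
    a * s ^ 2 - ε * s ^ 4 ≤ a ^ 2 / (4 * ε) := by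
  rw [le_div_iff₀ (by positivity)]
  nlinarith [sq_nonneg (2 * ε * s ^ 2 - a)]

lemma tendsto_mul_sq_sub_mul_pow_four_atBot (a : ℝ) {ε : ℝ} (hε : 0 < ε) :
    Tendsto (fun s : ℝ => a * s ^ 2 - ε * s ^ 4) atTop atBot := by
  have hsq : Tendsto (fun s : ℝ => s ^ 2) atTop atTop := tendsto_pow_atTop two_ne_zero
  have hfactor : Tendsto (fun s : ℝ => a - ε * s ^ 2) atTop atBot := by
    simpa only [sub_eq_add_neg, Function.comp_def] using
      tendsto_atBot_add_const_left _ a (tendsto_neg_atTop_atBot.comp (hsq.const_mul_atTop hε))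
  exact (hsq.atTop_mul_atBot₀ hfactor).congr fun s => by ring

theorem statement13_general (f : ℝ → ℝ) (hf : HypH f)
    (n : ℕ) (b : Fin n → ℝ → ℝ)
    (hbdd : ∀ i, ∃ C : ℝ, ∀ᵐ x : ℝ, |b i x| ≤ C)
    (Y : Set (ℝ → ℝ)) (hY : Y = (Submodule.span ℝ (Set.range b) : Submodule ℝ (ℝ → ℝ)))
    (hYX : ∀ u ∈ Y, memX u) :
    (∃ B : ℝ, ∀ u ∈ Y, phi f u ≤ B) ∧
    (∀ A : ℝ, 0 < A → ∃ R : ℝ, 0 < R ∧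
      ∀ u ∈ Y, R ≤ gagNorm u → phi f u ≤ -A) := by
  obtain ⟨hfc, -, ⟨t₀, ht₀, M, hM, hgrowth⟩, hAR, -, -⟩ := hf
  subst hY
  have := FiniteDimensional.span_of_finite ℝ (Set.finite_range b)
  obtain ⟨c, hc, d, hFge⟩ := exists_quartic_le_primF hfc ht₀ hM hgrowth hAR
  obtain ⟨K, hK, hKu⟩ := exists_gagNorm_le_mul_sqrt_integral _ hYX
  have key (u) (hu : u ∈ Submodule.span ℝ (range b)) :
      phi f u ≤ (4 * π)⁻¹ * gagNorm u ^ 2 - c / K ^ 4 * gagNorm u ^ 4 + d :=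
    have ⟨C, hC⟩ := ae_bounded_of_mem_span hbdd hu
    phi_le_of_quartic_le_primF hfc hc hK hFge (hYX u hu) hC (hKu u hu)
  have hε : 0 < c / K ^ 4 := by positivity
  refine ⟨⟨(4 * π)⁻¹ ^ 2 / (4 * (c / K ^ 4)) + d, fun u hu => ?_⟩, fun A _ => ?_⟩
  · linarith [key u hu, mul_sq_sub_mul_pow_four_le (4 * π)⁻¹ hε (gagNorm u)]
  · obtain ⟨R, hR⟩ := eventually_atTop.1
      ((tendsto_mul_sq_sub_mul_pow_four_atBot (4 * π)⁻¹ hε).eventually_le_atBot (-A - d))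
    refine ⟨max R 1, by positivity, fun u hu hRu => ?_⟩
    linarith [key u hu, hR _ ((le_max_left _ _).trans hRu)]

/-- behaviour of `φ` on finite-dimensional subspaces of bounded
functions (Lemma 3.3). -/
theorem statement13 (f : ℝ → ℝ) (hf : HypH f)
    (n : ℕ) (b : Fin n → ℝ → ℝ)
    (hbX : ∀ i, memX (b i)) (hbdd : ∀ i, ∃ C : ℝ, ∀ᵐ x : ℝ, |b i x| ≤ C)
    (Y : Set (ℝ → ℝ)) (hY : Y = (Submodule.span ℝ (Set.range b) : Submodule ℝ (ℝ → ℝ)))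
    (hYX : ∀ u ∈ Y, memX u) :
    (∃ B : ℝ, ∀ u ∈ Y, phi f u ≤ B) ∧
    (∀ A : ℝ, 0 < A → ∃ R : ℝ, 0 < R ∧
      ∀ u ∈ Y, R ≤ gagNorm u → phi f u ≤ -A) :=
  statement13_general f hf n b hbdd Y hY hYX
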